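/- arXiv:2507.14850 — 2 statements merged into one kernel-verified Lean document; each statement's English description precedes it below -/
import Mathlib

section
/- Let C = {s ∈ ℝⁿ : b(s) ≥ 0} for a continuously differentiable function b : ℝⁿ → ℝ, and consider the control system ṡ = f(s) + g(s)a with f, g locally Lipschitz. If a Lipschitz continuous feedback controller a(s) satisfies the CBF condition L_f b(s) + L_g b(s) a(s) + α(b(s)) ≥ 0 for all s, where α is a locally Lipschitz class-K function, then the set C is forward invariant: any solution with s(0) ∈ C satisfies s(t) ∈ C for all t ≥ 0 in its interval of existence. -/
open Set

/-- A class-K function: continuous, strictly increasing, vanishing at 0 (on `[0,∞)`). -/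
def IsClassK (α : ℝ → ℝ) : Prop :=
  ContinuousOn α (Set.Ici 0) ∧ StrictMonoOn α (Set.Ici 0) ∧ α 0 = 0

/-!
Along a solution, `y t = b (s t)` satisfies `y' ≥ -α y`, and near `0` the locally Lipschitz
`α` with `α 0 = 0` obeys `α x ≤ L |x|`, so where `y` is slightly negative we get `y' ≥ L y`.
Then on `[0, t₁]` the function `-y` can never reach the barrier `δ e^{(|L|+1)(t - t₁)}` from
below, since the barrier grows strictly faster than `-y` at a contact point; hence `-y ≤ δ`
for every small `δ > 0`, and `y ≥ 0`.
-/

theorem LocallyLipschitz.exists_norm_le_mul_norm {E F : Type*} [SeminormedAddCommGroup E]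
    [SeminormedAddCommGroup F] {φ : E → F} (hφ : LocallyLipschitz φ) (h0 : φ 0 = 0) :
    ∃ L ε : ℝ, 0 < ε ∧ ∀ x, ‖x‖ < ε → ‖φ x‖ ≤ L * ‖x‖ := by
  obtain ⟨K, U, hU, hKU⟩ := hφ 0
  obtain ⟨ε, hε, hball⟩ := Metric.mem_nhds_iff.1 hU
  refine ⟨K, ε, hε, fun x hx => ?_⟩
  have hxU : x ∈ U := hball (mem_ball_zero_iff.2 hx)
  simpa [h0] using hKU.dist_le_mul x hxU 0 (hball (Metric.mem_ball_self hε))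

section Barrier

variable {y y' : ℝ → ℝ} {a b L ε : ℝ}

theorem neg_image_le_of_deriv_right_ge_mul (hcont : ContinuousOn y (Icc a b))
    (hderiv : ∀ t ∈ Ico a b, HasDerivWithinAt y (y' t) (Ici t) t)
    (hbound : ∀ t ∈ Ico a b, -ε < y t → y t < 0 → L * y t ≤ y' t) (ha : 0 ≤ y a)
    {δ : ℝ} (hδ : 0 < δ) (hδε : δ < ε) : ∀ t ∈ Icc a b, -y t ≤ δ := by
  set r := |L| + 1
  set B : ℝ → ℝ := fun t => δ * Real.exp (r * (t - b))
  have hB_pos : ∀ t, 0 < B t := fun t => by positivity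
  have hB_le : ∀ t ≤ b, B t ≤ δ := fun t ht =>
    mul_le_of_le_one_right hδ.le <| Real.exp_le_one_iff.2 <|
      mul_nonpos_of_nonneg_of_nonpos (by positivity) (by linarith)
  have hB_deriv : ∀ t, HasDerivAt B (r * B t) t := fun t =>
    ((((hasDerivAt_id t).sub_const b).const_mul r).exp.const_mul δ).congr_deriv (by
      simp only [B, id, mul_one]; ring)
  have hfence : ∀ t ∈ Icc a b, -y t ≤ B t := by
    refine image_le_of_deriv_right_lt_deriv_boundary (f := fun t => -y t) (f' := fun t => -y' t)
      hcont.neg (fun t ht => (hderiv t ht).neg) ((neg_nonpos.2 ha).trans (hB_pos a).le) hB_deriv ?_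
    intro t ht hcontact
    have hyt : y t = -B t := by linarith
    have hslope := hbound t ht (by linarith [hB_le t ht.2.le]) (by linarith [hB_pos t])
    rw [hyt] at hslope
    calc -y' t ≤ L * B t := by linarith
      _ ≤ |L| * B t := mul_le_mul_of_nonneg_right (le_abs_self L) (hB_pos t).le
      _ < r * B t := by nlinarith [hB_pos t]
  exact fun t ht => (hfence t ht).trans (hB_le t ht.2)

theorem image_nonneg_of_deriv_right_ge_mul (hε : 0 < ε) (hcont : ContinuousOn y (Icc a b))
    (hderiv : ∀ t ∈ Ico a b, HasDerivWithinAt y (y' t) (Ici t) t)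
    (hbound : ∀ t ∈ Ico a b, -ε < y t → y t < 0 → L * y t ≤ y' t) (ha : 0 ≤ y a) :
    ∀ t ∈ Icc a b, 0 ≤ y t := by
  intro t ht
  by_contra! hneg
  have hδ : 0 < min (-y t) ε / 2 := half_pos (lt_min (neg_pos.2 hneg) hε)
  have := neg_image_le_of_deriv_right_ge_mul hcont hderiv hbound ha hδ
    (by linarith [min_le_right (-y t) ε]) t ht
  linarith [min_le_left (-y t) ε]

end Barrier

theorem image_nonneg_of_deriv_ge_neg_comp {y y' α : ℝ → ℝ} {a T : ℝ}
    (hα : LocallyLipschitz α) (hα0 : α 0 = 0)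
    (hderiv : ∀ t ∈ Ico a T, HasDerivAt y (y' t) t)
    (hbound : ∀ t ∈ Ico a T, -α (y t) ≤ y' t) (ha : 0 ≤ y a) :
    ∀ t ∈ Ico a T, 0 ≤ y t := by
  obtain ⟨L, ε, hε, hαL⟩ := hα.exists_norm_le_mul_norm hα0
  intro t ht
  have hsub : Icc a t ⊆ Ico a T := Icc_subset_Ico_right ht.2
  refine image_nonneg_of_deriv_right_ge_mul (L := L) hε
    (fun x hx => (hderiv x (hsub hx)).continuousAt.continuousWithinAt)
    (fun x hx => (hderiv x (hsub (Ico_subset_Icc_self hx))).hasDerivWithinAt) ?_ ha t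
    ⟨ht.1, le_rfl⟩
  intro x hx hyε hy0
  have hyα := hαL (y x) (by rw [Real.norm_eq_abs, abs_of_neg hy0]; linarith)
  rw [Real.norm_eq_abs, Real.norm_eq_abs, abs_of_neg hy0] at hyα
  linarith [le_abs_self (α (y x)), hbound x (hsub (Ico_subset_Icc_self hx))]

theorem stmt_0_general
    {n q : ℕ}
    (b : EuclideanSpace ℝ (Fin n) → ℝ)
    (hb : ContDiff ℝ 1 b)
    (f : EuclideanSpace ℝ (Fin n) → EuclideanSpace ℝ (Fin n))
    (g : EuclideanSpace ℝ (Fin n) → (EuclideanSpace ℝ (Fin q) →L[ℝ] EuclideanSpace ℝ (Fin n)))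
    (a : EuclideanSpace ℝ (Fin n) → EuclideanSpace ℝ (Fin q))
    (α : ℝ → ℝ) (hα : IsClassK α) (hαlip : LocallyLipschitz α)
    (hCBF : ∀ x, fderiv ℝ b x (f x) + fderiv ℝ b x (g x (a x)) + α (b x) ≥ 0)
    (s : ℝ → EuclideanSpace ℝ (Fin n)) (T : ℝ)
    (hsol : ∀ t ∈ Set.Ico (0 : ℝ) T,
      HasDerivAt s (f (s t) + g (s t) (a (s t))) t)
    (hinit : b (s 0) ≥ 0) :
    ∀ t ∈ Set.Ico (0 : ℝ) T, b (s t) ≥ 0 := by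
  have hchain : ∀ t ∈ Ico (0 : ℝ) T, HasDerivAt (fun t => b (s t))
      (fderiv ℝ b (s t) (f (s t) + g (s t) (a (s t)))) t := fun t ht =>
    (hb.differentiable one_ne_zero (s t)).hasFDerivAt.comp_hasDerivAt t (hsol t ht)
  refine image_nonneg_of_deriv_ge_neg_comp hαlip hα.2.2 hchain (fun t _ => ?_) hinit
  rw [map_add]
  linarith [hCBF (s t)]

/-- CBF forward invariance (Theorem of Ames et al.): if a Lipschitz feedback controller
satisfies `L_f b(s) + L_g b(s) a(s) + α(b(s)) ≥ 0` everywhere, then the superlevel set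
`C = {s | b s ≥ 0}` is forward invariant along solutions of `ṡ = f(s) + g(s) a(s)`. -/
theorem stmt_0
    {n q : ℕ}
    (b : EuclideanSpace ℝ (Fin n) → ℝ)
    (hb : ContDiff ℝ 1 b)
    (f : EuclideanSpace ℝ (Fin n) → EuclideanSpace ℝ (Fin n))
    (g : EuclideanSpace ℝ (Fin n) → (EuclideanSpace ℝ (Fin q) →L[ℝ] EuclideanSpace ℝ (Fin n)))
    (hf : LocallyLipschitz f) (hg : LocallyLipschitz g)
    (a : EuclideanSpace ℝ (Fin n) → EuclideanSpace ℝ (Fin q))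
    (K : NNReal) (ha : LipschitzWith K a)
    (α : ℝ → ℝ) (hα : IsClassK α) (hαlip : LocallyLipschitz α)
    (hCBF : ∀ x, fderiv ℝ b x (f x) + fderiv ℝ b x (g x (a x)) + α (b x) ≥ 0)
    (s : ℝ → EuclideanSpace ℝ (Fin n)) (T : ℝ)
    (hsol : ∀ t ∈ Set.Ico (0 : ℝ) T,
      HasDerivAt s (f (s t) + g (s t) (a (s t))) t)
    (hinit : b (s 0) ≥ 0) :
    ∀ t ∈ Set.Ico (0 : ℝ) T, b (s t) ≥ 0 :=
  stmt_0_general b hb f g a α hα hαlip hCBF s T hsol hinit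
end

section
/- Let b : ℝⁿ → ℝ have relative degree m for the system ṡ = f(s)+g(s)a, define ζ₀ = b and ζᵢ(s) = ζ̇ᵢ₋₁(s) + αᵢ(ζᵢ₋₁(s)) for i = 1,…,m with class-K functions αᵢ, and set Cᵢ = {s : ζᵢ₋₁(s) ≥ 0}. If along a trajectory s(t) with s(0) ∈ ⋂ᵢ₌₁ᵐ Cᵢ we have ζ_m(s(t)) ≥ 0 for all t (i.e., the HOCBF condition holds), then each set Cᵢ, i = 1,…,m, and in particular the original safety set C₁ = {s : b(s) ≥ 0}, is forward invariant along this trajectory. -/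
/-- Scalar comparison lemma: if `ẏ ≥ -α (y)` with `α` locally Lipschitz and `α 0 = 0`,
and `y 0 ≥ 0`, then `y t ≥ 0` for all `t ≥ 0`. -/
lemma comparison_nonneg {α : ℝ → ℝ} (hL : LocallyLipschitz α) (hα0 : α 0 = 0)
    {y d : ℝ → ℝ} (hy : ∀ t : ℝ, 0 ≤ t → HasDerivAt y (d t) t)
    (hd : ∀ t : ℝ, 0 ≤ t → -α (y t) ≤ d t) (h0 : 0 ≤ y 0) :
    ∀ t : ℝ, 0 ≤ t → 0 ≤ y t := by
  by_contra h
  push_neg at h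
  obtain ⟨t₁, ht₁, hyt₁⟩ := h
  have hcont : ∀ t : ℝ, 0 ≤ t → ContinuousAt y t := fun t ht => (hy t ht).continuousAt
  set S : Set ℝ := Set.Icc 0 t₁ ∩ y ⁻¹' Set.Ici 0 with hS
  have hScl : IsClosed S := by
    have hys : ContinuousOn y (Set.Icc 0 t₁) := fun t ht =>
      (hcont t ht.1).continuousWithinAt
    exact hys.preimage_isClosed_of_isClosed isClosed_Icc isClosed_Ici
  have h0S : (0 : ℝ) ∈ S := ⟨⟨le_refl 0, ht₁⟩, h0⟩
  have hSbdd : BddAbove S := ⟨t₁, fun x hx => hx.1.2⟩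
  set τ := sSup S with hτ
  have hτS : τ ∈ S := hScl.csSup_mem ⟨0, h0S⟩ hSbdd
  have hτ0 : 0 ≤ τ := hτS.1.1
  have hτt₁ : τ ≤ t₁ := hτS.1.2
  have hyneg : ∀ t : ℝ, τ < t → t ≤ t₁ → y t < 0 := by
    intro t h1 h2
    by_contra hcon
    push_neg at hcon
    have : t ∈ S := ⟨⟨le_trans hτ0 h1.le, h2⟩, hcon⟩
    exact absurd (le_csSup hSbdd this) (not_le.mpr h1)
  have hτlt : τ < t₁ := by
    rcases lt_or_eq_of_le hτt₁ with h | h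
    · exact h
    · exact absurd hτS.2 (by simp [h, not_le.mpr hyt₁])
  have hyτ : y τ = 0 := by
    refine le_antisymm ?_ hτS.2
    have htend : Filter.Tendsto y (nhdsWithin τ (Set.Ioi τ)) (nhds (y τ)) :=
      ((hcont τ hτ0).continuousWithinAt)
    refine le_of_tendsto htend ?_
    filter_upwards [Ioo_mem_nhdsGT_of_mem (Set.left_mem_Ico.mpr hτlt)] with t ht
    exact (hyneg t ht.1 ht.2.le).le
  -- Lipschitz bound near 0 = y τ
  obtain ⟨K, U, hU, hK⟩ := hL 0
  have hUτ : U ∈ nhds (y τ) := by rw [hyτ]; exact hU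
  have : y ⁻¹' U ∈ nhds τ := (hcont τ hτ0).preimage_mem_nhds hUτ
  obtain ⟨ε, hε, hball⟩ := Metric.mem_nhds_iff.mp this
  set t₂ : ℝ := min (τ + ε / 2) t₁ with ht₂def
  have ht₂gt : τ < t₂ := lt_min (by linarith) hτlt
  have ht₂le : t₂ ≤ t₁ := min_le_right _ _
  have hmemU : ∀ t ∈ Set.Icc τ t₂, y t ∈ U := by
    intro t ht
    apply hball
    have : |t - τ| < ε := by
      rw [abs_sub_lt_iff]
      constructor
      · have : t ≤ τ + ε / 2 := le_trans ht.2 (min_le_left _ _)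
        linarith
      · linarith [ht.1]
    simpa [Real.dist_eq] using this
  have hyle : ∀ t ∈ Set.Icc τ t₂, y t ≤ 0 := by
    intro t ht
    rcases eq_or_lt_of_le ht.1 with h | h
    · rw [← h, hyτ]
    · exact (hyneg t h (le_trans ht.2 ht₂le)).le
  -- derivative bound: d t ≥ K * y t on [τ, t₂]
  have hdge : ∀ t ∈ Set.Icc τ t₂, (K : ℝ) * y t ≤ d t := by
    intro t ht
    have h1 : -α (y t) ≤ d t := hd t (le_trans hτ0 ht.1)
    have h2 : α (y t) ≤ (K : ℝ) * |y t| := by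
      have := hK.dist_le_mul (y t) (hmemU t ht) 0 (mem_of_mem_nhds hU)
      rw [hα0] at this
      calc α (y t) ≤ |α (y t) - 0| := by rw [sub_zero]; exact le_abs_self _
        _ = dist (α (y t)) 0 := by rw [Real.dist_eq]
        _ ≤ (K : ℝ) * dist (y t) 0 := this
        _ = (K : ℝ) * |y t| := by rw [Real.dist_eq, sub_zero]
    have h3 : |y t| = -(y t) := abs_of_nonpos (hyle t ht)
    rw [h3] at h2
    nlinarith
  -- Grönwall: g t = y t * exp (-K t) is monotone on [τ, t₂]
  set g : ℝ → ℝ := fun t => y t * Real.exp (-(K : ℝ) * t) with hg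
  have hgmono : MonotoneOn g (Set.Icc τ t₂) := by
    apply monotoneOn_of_hasDerivWithinAt_nonneg (convex_Icc τ t₂)
      (f' := fun t => (d t - (K : ℝ) * y t) * Real.exp (-(K : ℝ) * t))
    · intro t ht
      exact ((hcont t (le_trans hτ0 ht.1)).mul
        (Real.continuous_exp.continuousAt.comp (by fun_prop))).continuousWithinAt
    · intro t ht
      rw [interior_Icc] at ht
      have h1 : HasDerivAt y (d t) t := hy t (le_trans hτ0 ht.1.le)
      have hlin : HasDerivAt (fun u : ℝ => -(K : ℝ) * u) (-(K : ℝ)) t := by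
        simpa using (hasDerivAt_id t).const_mul (-(K : ℝ))
      have h2 := hlin.exp
      have := h1.mul h2
      have heq : d t * Real.exp (-(K : ℝ) * t) + y t * (Real.exp (-(K : ℝ) * t) * -(K : ℝ))
          = (d t - (K : ℝ) * y t) * Real.exp (-(K : ℝ) * t) := by ring
      rw [heq] at this
      exact this.hasDerivWithinAt
    · intro t ht
      rw [interior_Icc] at ht
      have := hdge t ⟨ht.1.le, ht.2.le⟩
      have hexp := Real.exp_pos (-(K : ℝ) * t)
      nlinarith
  have h1 : g τ ≤ g t₂ := hgmono (Set.left_mem_Icc.mpr ht₂gt.le)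
    (Set.right_mem_Icc.mpr ht₂gt.le) ht₂gt.le
  have h2 : g τ = 0 := by simp [hg, hyτ]
  have h3 : g t₂ < 0 := mul_neg_of_neg_of_pos (hyneg t₂ ht₂gt ht₂le) (Real.exp_pos _)
  linarith

/-- HOCBF forward invariance: with `ζ₀ = b` and
`ζᵢ = ζ̇ᵢ₋₁ + αᵢ(ζᵢ₋₁)`, if along a trajectory `s(t)` all `ζᵢ₋₁(s 0) ≥ 0` and the HOCBF
condition `ζ_m(s t) ≥ 0` holds for all `t ≥ 0`, then each set `Cᵢ = {s | ζᵢ₋₁ s ≥ 0}`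
(in particular the safety set `C₁ = {s | b s ≥ 0}`) is forward invariant along the
trajectory. Here `α (i)` plays the role of `α_{i+1}` and `ζ 0 = b`. -/
theorem stmt_2
    {n : ℕ} (m : ℕ) (hm : 1 ≤ m)
    (b : EuclideanSpace ℝ (Fin n) → ℝ)
    (ζ : ℕ → EuclideanSpace ℝ (Fin n) → ℝ)
    (hζ0 : ζ 0 = b)
    (α : ℕ → ℝ → ℝ)
    (hα : ∀ i < m, IsClassK (α i) ∧ LocallyLipschitz (α i))
    (s : ℝ → EuclideanSpace ℝ (Fin n))
    -- the defining relation `ζ_{i+1} = ζ̇ᵢ + α_{i+1}(ζᵢ)` along the trajectory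
    (hrec : ∀ i < m, ∀ t : ℝ, 0 ≤ t →
      HasDerivAt (fun τ => ζ i (s τ)) (ζ (i + 1) (s t) - α i (ζ i (s t))) t)
    (hinit : ∀ i < m, ζ i (s 0) ≥ 0)
    (hHOCBF : ∀ t : ℝ, 0 ≤ t → ζ m (s t) ≥ 0) :
    (∀ i < m, ∀ t : ℝ, 0 ≤ t → ζ i (s t) ≥ 0) ∧
      (∀ t : ℝ, 0 ≤ t → b (s t) ≥ 0) := by
  have key : ∀ j : ℕ, ∀ i : ℕ, i + j = m → ∀ t : ℝ, 0 ≤ t → 0 ≤ ζ i (s t) := by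
    intro j
    induction j with
    | zero => intro i hi t ht; rw [Nat.add_zero] at hi; rw [hi]; exact hHOCBF t ht
    | succ k ih =>
      intro i hi t ht
      have him : i < m := by omega
      have hnext : ∀ t : ℝ, 0 ≤ t → 0 ≤ ζ (i + 1) (s t) := ih (i + 1) (by omega)
      obtain ⟨hKi, hLi⟩ := hα i him
      refine comparison_nonneg hLi hKi.2.2 (y := fun τ => ζ i (s τ))
        (d := fun τ => ζ (i + 1) (s τ) - α i (ζ i (s τ)))
        (hrec i him) ?_ (hinit i him) t ht
      intro τ hτ
      show -α i (ζ i (s τ)) ≤ ζ (i + 1) (s τ) - α i (ζ i (s τ))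
      have := hnext τ hτ
      linarith
  refine ⟨fun i hi t ht => key (m - i) i (by omega) t ht, fun t ht => ?_⟩
  rw [← hζ0]
  exact key m 0 (by omega) t ht
end
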